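/- arXiv:1007.2388 — 2 statements merged into one kernel-verified Lean document; each statement's English description precedes it below -/
import Mathlib

section
/- Define g : ℝ → ℝ by g(y) = y·log(|y|/(1+|y|)) for y ≠ 0 and g(0) = 0. Then g is monotone decreasing in the sense that (y - y')·(g(y) - g(y')) ≤ 0 for all y, y' ∈ ℝ. -/
noncomputable def g₂ (y : ℝ) : ℝ := if y = 0 then 0 else y * Real.log (|y| / (1 + |y|))

/-!
`g₂` is odd, so it suffices that it is antitone on `[0, ∞)`. There it equals
`y log y - y log (1 + y)`, whose derivative `log (y / (1 + y)) + 1 / (1 + y)` is nonpositive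
by `log t ≤ t - 1` at `t = y / (1 + y)`.
-/

open Real Set

lemma g₂_neg (y : ℝ) : g₂ (-y) = -g₂ y := by
  unfold g₂
  split_ifs <;> simp_all

lemma g₂_eqOn_Ici : EqOn g₂ (fun y ↦ y * log y - y * log (1 + y)) (Ici 0) := by
  intro y (hy : 0 ≤ y)
  rcases hy.eq_or_lt with rfl | hy
  · simp [g₂]
  · rw [g₂, if_neg hy.ne', abs_of_pos hy, log_div hy.ne' (by positivity), mul_sub]

lemma hasDerivAt_mul_log_sub_mul_log_one_add {x : ℝ} (hx : 0 < x) :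
    HasDerivAt (fun y ↦ y * log y - y * log (1 + y)) (log (x / (1 + x)) + 1 / (1 + x)) x := by
  have hx₁ : 0 < 1 + x := by linarith
  have h : HasDerivAt (fun y ↦ y * log y - y * log (1 + y))
      (log x + 1 - (1 * log (1 + x) + x * (1 / (1 + x)))) x :=
    (hasDerivAt_mul_log hx.ne').sub
      ((hasDerivAt_id x).mul (((hasDerivAt_id x).const_add 1).log hx₁.ne'))
  convert h using 1
  rw [log_div hx.ne' hx₁.ne']
  field_simp
  ring

lemma log_div_one_add_add_one_div_nonpos {x : ℝ} (hx : 0 < x) :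
    log (x / (1 + x)) + 1 / (1 + x) ≤ 0 := by
  have hx₁ : 0 < 1 + x := by linarith
  have hlog := log_le_sub_one_of_pos (div_pos hx hx₁)
  have hsub : x / (1 + x) - 1 = -(1 / (1 + x)) := by field_simp; ring
  linarith

lemma antitoneOn_g₂_Ici : AntitoneOn g₂ (Ici 0) := by
  refine AntitoneOn.congr ?_ g₂_eqOn_Ici.symm
  have hcont : ContinuousOn (fun y ↦ y * log y - y * log (1 + y)) (Ici 0) :=
    continuous_mul_log.continuousOn.sub <| continuousOn_id.mul <|
      continuousOn_log.comp (by fun_prop) fun y (hy : 0 ≤ y) ↦ by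
        simp only [mem_compl_iff, mem_singleton_iff]; positivity
  refine antitoneOn_of_deriv_nonpos (convex_Ici 0) hcont ?_ ?_ <;> rw [interior_Ici] <;>
    intro x (hx : 0 < x)
  · exact (hasDerivAt_mul_log_sub_mul_log_one_add hx).differentiableAt.differentiableWithinAt
  · rw [(hasDerivAt_mul_log_sub_mul_log_one_add hx).deriv]
    exact log_div_one_add_add_one_div_nonpos hx

theorem stmt_7 : ∀ y y' : ℝ, (y - y') * (g₂ y - g₂ y') ≤ 0 := by
  have hanti : Antitone g₂ := antitone_of_odd_of_monotoneOn_nonneg g₂_neg antitoneOn_g₂_Ici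
  intro y y'
  simpa only [mul_comm, id] using (antivary_id_iff.2 hanti).sub_mul_sub_nonpos y' y
end

section
/- Define g : ℝ^d → ℝ^d by g(y) = y·log(|y|/(1+|y|)) for y ≠ 0 and g(0) = 0, where |·| is the Euclidean norm. Then ⟨y - y', g(y) - g(y')⟩ ≤ 0 for all y, y' ∈ ℝ^d. -/
open RealInnerProductSpace

open scoped Classical in
noncomputable def gd (d : ℕ) (v : EuclideanSpace ℝ (Fin d)) : EuclideanSpace ℝ (Fin d) :=
  if v = 0 then 0 else Real.log (‖v‖ / (1 + ‖v‖)) • v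

/-!
Writing `g(y) = a(|y|) y` with `a ≤ 0`, Cauchy–Schwarz reduces the claim to the one-dimensional
inequality `(r - s) (φ r - φ s) ≤ 0` for `φ t = t log (t / (1 + t))`, i.e. to `φ` being antitone
on `[0, ∞)`. This holds because `φ' t = log (t / (1 + t)) + 1 / (1 + t) ≤ 0` by `log u ≤ u - 1`.
-/

open Real Set

lemma real_inner_sub_smul_sub_smul_le {E : Type*} [NormedAddCommGroup E] [InnerProductSpace ℝ E]
    (x y : E) {a b : ℝ} (hab : a + b ≤ 0) :
    ⟪x - y, a • x - b • y⟫ ≤ (‖x‖ - ‖y‖) * (‖x‖ * a - ‖y‖ * b) := by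
  have hcs : ⟪x, y⟫ ≤ ‖x‖ * ‖y‖ := real_inner_le_norm x y
  have hexpand : ⟪x - y, a • x - b • y⟫ = a * ‖x‖ ^ 2 + b * ‖y‖ ^ 2 - (a + b) * ⟪x, y⟫ := by
    simp only [inner_sub_left, inner_sub_right, real_inner_smul_right, real_inner_self_eq_norm_sq,
      real_inner_comm x y]
    ring
  rw [hexpand]
  nlinarith

lemma log_div_one_add_nonpos {t : ℝ} (ht : 0 ≤ t) : log (t / (1 + t)) ≤ 0 :=
  log_nonpos (by positivity) (div_le_one_of_le₀ (by linarith) (by positivity))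

lemma hasDerivAt_mul_log_div_one_add {t : ℝ} (ht : 0 < t) :
    HasDerivAt (fun t => t * log (t / (1 + t))) (log (t / (1 + t)) + 1 / (1 + t)) t := by
  have h1t : 1 + t ≠ 0 := by positivity
  have hdiv : HasDerivAt (fun t => t / (1 + t)) (1 / (1 + t) ^ 2) t :=
    ((hasDerivAt_id' t).div ((hasDerivAt_id' t).const_add 1) h1t).congr_deriv (by ring)
  refine ((hasDerivAt_id' t).mul ((hasDerivAt_log (by positivity)).comp t hdiv)).congr_deriv ?_
  simp only [Function.comp_apply]
  field_simp

lemma deriv_mul_log_div_one_add_nonpos {t : ℝ} (ht : 0 < t) :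
    log (t / (1 + t)) + 1 / (1 + t) ≤ 0 := by
  have hlog := log_le_sub_one_of_pos (show 0 < t / (1 + t) by positivity)
  have hsub : t / (1 + t) - 1 = -(1 / (1 + t)) := by field_simp; ring
  linarith

lemma antitoneOn_mul_log_div_one_add :
    AntitoneOn (fun t : ℝ => t * log (t / (1 + t))) (Ici 0) := by
  have hpos : AntitoneOn (fun t : ℝ => t * log (t / (1 + t))) (Ioi 0) := by
    refine antitoneOn_of_hasDerivWithinAt_nonpos (f' := fun t => log (t / (1 + t)) + 1 / (1 + t))
      (convex_Ioi 0)
      (fun t ht => (hasDerivAt_mul_log_div_one_add ht).continuousAt.continuousWithinAt)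
      (fun t ht => ?_) (fun t ht => ?_)
    · rw [interior_Ioi] at ht
      exact (hasDerivAt_mul_log_div_one_add ht).hasDerivWithinAt
    · rw [interior_Ioi] at ht
      exact deriv_mul_log_div_one_add_nonpos ht
  intro s hs t ht hst
  rcases (mem_Ici.mp hs).eq_or_lt with rfl | hs'
  · simpa using mul_nonpos_of_nonneg_of_nonpos ht (log_div_one_add_nonpos ht)
  · exact hpos hs' (hs'.trans_le hst) hst

lemma gd_eq_smul (d : ℕ) (v : EuclideanSpace ℝ (Fin d)) :
    gd d v = log (‖v‖ / (1 + ‖v‖)) • v := by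
  unfold gd
  split_ifs with h
  · simp [h]
  · rfl

theorem stmt_8 (d : ℕ) (y y' : EuclideanSpace ℝ (Fin d)) :
    ⟪y - y', gd d y - gd d y'⟫ ≤ 0 := by
  rw [gd_eq_smul, gd_eq_smul]
  have hsum : log (‖y‖ / (1 + ‖y‖)) + log (‖y'‖ / (1 + ‖y'‖)) ≤ 0 :=
    add_nonpos (log_div_one_add_nonpos (norm_nonneg y)) (log_div_one_add_nonpos (norm_nonneg y'))
  have hanti := (antivaryOn_id_iff.mpr antitoneOn_mul_log_div_one_add).sub_mul_sub_nonpos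
    (mem_Ici.mpr (norm_nonneg y')) (mem_Ici.mpr (norm_nonneg y))
  calc ⟪y - y', log (‖y‖ / (1 + ‖y‖)) • y - log (‖y'‖ / (1 + ‖y'‖)) • y'⟫
      ≤ (‖y‖ - ‖y'‖) * (‖y‖ * log (‖y‖ / (1 + ‖y‖)) - ‖y'‖ * log (‖y'‖ / (1 + ‖y'‖))) :=
        real_inner_sub_smul_sub_smul_le y y' hsum
    _ ≤ 0 := (mul_comm _ _).trans_le hanti
end
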